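/- Let ε, α, M, ν, λ > 0 and T > 0. Suppose u : ℝ^d × [0,T] → ℝ^d and p, φ, w, U, ψ : ℝ^d × [0,T] → ℝ are smooth, Ω-periodic in the space variable, and satisfy for all (x,t): ∂_t φ + ∇·(uφ) = M Δw, w = λ(-ε² Δφ + φU + α ψ), ∂_t U = 2φ ∂_t φ, ∂_t u + (u·∇)u + ∇p - ν Δu + φ∇w = 0, ∇·u = 0, together with -Δψ(·,t) = φ(·,t) - φ̄(·,t) and ∫_Ω ψ(·,t) dx = 0 for every t. Then for every t ∈ (0,T), d/dt E(u,φ,U) = -M ‖∇w‖² - ν ‖∇u‖², where E(u,φ,U) = ∫_Ω ( (1/2)|u|² + λ( (ε²/2)|∇φ|² + (1/4)U² + (α/2)|∇ψ|² ) ) dx. -/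

import Mathlib

open MeasureTheory Real Set
open scoped RealInnerProductSpace

noncomputable section
namespace PFBCP

/-- Euclidean space ℝ^d. -/
abbrev Eu (d : ℕ) := EuclideanSpace ℝ (Fin d)

/-- The periodic box Ω = [0, 2π]^d. -/
def Box (d : ℕ) : Set (Eu d) := {x | ∀ i, x i ∈ Icc (0:ℝ) (2 * π)}

/-- i-th coordinate unit vector. -/
def uvec (d : ℕ) (i : Fin d) : Eu d := EuclideanSpace.single i 1

/-- Ω-periodicity: 2π-periodic in each coordinate direction. -/
def OmegaPeriodic {d : ℕ} {F : Type*} [NormedAddCommGroup F] (f : Eu d → F) : Prop :=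
  ∀ (x : Eu d) (i : Fin d), f (x + (2 * π) • uvec d i) = f x

/-- Laplacian (componentwise for vector-valued functions). -/
def lap {d : ℕ} {F : Type*} [NormedAddCommGroup F] [NormedSpace ℝ F]
    (f : Eu d → F) (x : Eu d) : F :=
  ∑ i, fderiv ℝ (fun y => fderiv ℝ f y (uvec d i)) x (uvec d i)

/-- Divergence of a vector field. -/
def dvg {d : ℕ} (u : Eu d → Eu d) (x : Eu d) : ℝ :=
  ∑ i, fderiv ℝ u x (uvec d i) i

/-- (u·∇)v, the directional derivative of `v` along `u`. -/
def conv {d : ℕ} (u v : Eu d → Eu d) (x : Eu d) : Eu d :=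
  fderiv ℝ v x (u x)

/-- Squared Frobenius norm of the gradient of a vector field. -/
def gradVSq {d : ℕ} (u : Eu d → Eu d) (x : Eu d) : ℝ :=
  ∑ i, ∑ j, (fderiv ℝ u x (uvec d i) j) ^ 2

/-- Mean value of a scalar function over the box Ω. -/
def avg {d : ℕ} (f : Eu d → ℝ) : ℝ :=
  (volume (Box d)).toReal⁻¹ * ∫ x in Box d, f x


lemma box_eq_image (d : ℕ) :
    Box d = (MeasurableEquiv.toLp 2 (Fin d → ℝ)) '' (Set.Icc (fun _ => 0) (fun _ => 2*π)) := by
  ext x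
  constructor
  · intro h
    exact ⟨x.ofLp, ⟨fun i => (h i).1, fun i => (h i).2⟩, rfl⟩
  · rintro ⟨y, ⟨h1, h2⟩, rfl⟩ i
    exact ⟨h1 i, h2 i⟩

lemma isCompact_box (d : ℕ) : IsCompact (Box d) := by
  have : Box d = (EuclideanSpace.equiv (Fin d) ℝ).symm '' (Set.Icc (fun _ => 0) (fun _ => 2*π)) :=
    box_eq_image d
  rw [this]
  exact (isCompact_Icc).image (EuclideanSpace.equiv (Fin d) ℝ).symm.continuous

lemma measurableSet_box (d : ℕ) : MeasurableSet (Box d) := (isCompact_box d).isClosed.measurableSet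

lemma integral_box_eq (d : ℕ) (F : Eu d → ℝ) :
    ∫ x in Box d, F x = ∫ y in Set.Icc (fun _ => (0:ℝ)) (fun _ => 2*π),
      F ((EuclideanSpace.equiv (Fin d) ℝ).symm y) := by
  rw [box_eq_image]
  exact (PiLp.volume_preserving_toLp (Fin d)) |>.setIntegral_image_emb
    (MeasurableEquiv.toLp 2 (Fin d → ℝ)).measurableEmbedding F _
lemma insertNth_shift {n : ℕ} (i : Fin (n+1)) (x : Fin n → ℝ) :
    (i.insertNth (2*π) x) = (i.insertNth 0 x) + (2*π) • (Pi.single i 1 : Fin (n+1) → ℝ) := by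
  ext j
  rcases eq_or_ne j i with rfl | hj
  · simp
  · rcases Fin.exists_succAbove_eq hj with ⟨k, rfl⟩
    simp [Pi.single_apply, (Fin.succAbove_ne i k)]

lemma ftc_pi {n : ℕ} (g : (Fin (n+1) → ℝ) → ℝ) (hg : ContDiff ℝ (⊤ : ℕ∞) g)
    (hp : ∀ (x : Fin (n+1) → ℝ) (i : Fin (n+1)), g (x + (2*π) • (Pi.single i 1 : Fin (n+1) → ℝ)) = g x)
    (i₀ : Fin (n+1)) :
    ∫ x in Set.Icc (fun _ => (0:ℝ)) (fun _ => 2*π), fderiv ℝ g x (Pi.single i₀ 1) = 0 := by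
  have hle : (fun _ => (0:ℝ)) ≤ (fun _ : Fin (n+1) => 2*π) := fun i => by positivity
  have hdg : Differentiable ℝ g := hg.differentiable (by simp)
  have key := integral_divergence_of_hasFDerivAt_off_countable'
    (fun _ => (0:ℝ)) (fun _ => 2*π) hle
    (fun j => if j = i₀ then g else 0)
    (fun j x => if j = i₀ then fderiv ℝ g x else 0)
    ∅ countable_empty
    (fun j => by
      rcases eq_or_ne j i₀ with rfl | hj
      · simpa using hg.continuous.continuousOn
      · simp [hj]; exact continuousOn_const)
    (fun x _ j => by
      rcases eq_or_ne j i₀ with rfl | hj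
      · simpa using (hdg x).hasFDerivAt
      · simp [hj]; exact hasFDerivAt_const 0 x)
    (by
      have : (fun x => ∑ j, (if j = i₀ then fderiv ℝ g x else 0) (Pi.single j 1))
          = fun x => fderiv ℝ g x (Pi.single i₀ 1) := by
        funext x
        rw [Finset.sum_eq_single i₀]
        · simp
        · intro j _ hj; simp [hj]
        · simp
      rw [this]
      exact ((hg.continuous_fderiv (by simp)).clm_apply continuous_const).continuousOn.integrableOn_compact
        isCompact_Icc)
  have hsum : (fun x => ∑ j, (if j = i₀ then fderiv ℝ g x else 0) (Pi.single j 1))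
      = fun x => fderiv ℝ g x (Pi.single i₀ 1) := by
    funext x
    rw [Finset.sum_eq_single i₀]
    · simp
    · intro j _ hj; simp [hj]
    · simp
  rw [hsum] at key
  rw [key]
  apply Finset.sum_eq_zero
  intro j _
  rcases eq_or_ne j i₀ with rfl | hj
  · have : ∀ x : Fin n → ℝ, g (j.insertNth ((fun _ => 2*π) j) x) = g (j.insertNth ((fun _ => (0:ℝ)) j) x) := by
      intro x
      have := insertNth_shift j x
      simp only at this ⊢
      rw [this, hp]
    simp only [if_pos rfl]
    rw [sub_eq_zero]
    exact setIntegral_congr_fun measurableSet_Icc (fun x _ => this x)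
  · simp [hj]
lemma ftc_box {d : ℕ} (hd : d ≠ 0) (f : Eu d → ℝ) (hf : ContDiff ℝ (⊤ : ℕ∞) f)
    (hp : OmegaPeriodic f) (i : Fin d) :
    ∫ x in Box d, fderiv ℝ f x (uvec d i) = 0 := by
  obtain ⟨n, rfl⟩ : ∃ n, d = n + 1 := ⟨d - 1, (Nat.succ_pred_eq_of_pos (Nat.pos_of_ne_zero hd)).symm⟩
  set e := EuclideanSpace.equiv (Fin (n+1)) ℝ with he
  set g : (Fin (n+1) → ℝ) → ℝ := fun y => f (e.symm y) with hgdef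
  have hg : ContDiff ℝ (⊤ : ℕ∞) g := hf.comp e.symm.contDiff
  have hfd : Differentiable ℝ f := hf.differentiable (by simp)
  have hgderiv : ∀ y : Fin (n+1) → ℝ, ∀ v : Fin (n+1) → ℝ,
      fderiv ℝ g y v = fderiv ℝ f (e.symm y) (e.symm v) := by
    intro y v
    have h1 : HasFDerivAt g ((fderiv ℝ f (e.symm y)).comp (e.symm : (Fin (n+1) → ℝ) →L[ℝ] Eu (n+1))) y :=
      (hfd (e.symm y)).hasFDerivAt.comp y e.symm.hasFDerivAt
    rw [h1.fderiv]; rfl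
  have hgp : ∀ (x : Fin (n+1) → ℝ) (j : Fin (n+1)), g (x + (2*π) • (Pi.single j 1 : Fin (n+1) → ℝ)) = g x := by
    intro x j
    have : e.symm (x + (2*π) • (Pi.single j 1 : Fin (n+1) → ℝ)) = e.symm x + (2*π) • uvec (n+1) j := by
      rw [map_add, _root_.map_smul]; rfl
    rw [hgdef]; simp only
    rw [this, hp]
  have := ftc_pi g hg hgp i
  rw [integral_box_eq]
  have : (fun y => fderiv ℝ f (e.symm y) (uvec (n+1) i)) = fun y => fderiv ℝ g y (Pi.single i 1) := by
    funext y; rw [hgderiv]; rfl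
  rw [show (fun y => fderiv ℝ f ((EuclideanSpace.equiv (Fin (n+1)) ℝ).symm y) (uvec (n+1) i))
      = fun y => fderiv ℝ g y (Pi.single i 1) from this]
  exact ftc_pi g hg hgp i
variable {F' : Type*} [NormedAddCommGroup F'] [NormedSpace ℝ F']

/-- slice of a joint function is smooth -/
lemma contDiff_slice {d : ℕ} {f : Eu d × ℝ → F'} (hf : ContDiff ℝ (⊤ : ℕ∞) f) (t : ℝ) :
    ContDiff ℝ (⊤ : ℕ∞) (fun y => f (y, t)) :=
  hf.comp (contDiff_id.prodMk contDiff_const)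

/-- spatial fderiv of slice = joint fderiv with (v,0) -/
lemma fderiv_slice {d : ℕ} {f : Eu d × ℝ → F'} (hf : ContDiff ℝ (⊤ : ℕ∞) f) (t : ℝ) (x v : Eu d) :
    fderiv ℝ (fun y => f (y, t)) x v = fderiv ℝ f (x, t) (v, 0) := by
  have h1 : HasFDerivAt (fun y : Eu d => (y, t)) (ContinuousLinearMap.inl ℝ (Eu d) ℝ) x :=
    (hasFDerivAt_id x).prodMk (hasFDerivAt_const t x)
  have h2 : HasFDerivAt f (fderiv ℝ f (x, t)) (x, t) :=
    (hf.differentiable (by simp) (x, t)).hasFDerivAt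
  have h3 : HasFDerivAt (fun y => f (y, t))
      ((fderiv ℝ f (x, t)).comp (ContinuousLinearMap.inl ℝ (Eu d) ℝ)) x := h2.comp x h1
  rw [h3.fderiv]; rfl

/-- time derivative of slice -/
lemma hasDerivAt_slice {d : ℕ} {f : Eu d × ℝ → F'} (hf : ContDiff ℝ (⊤ : ℕ∞) f) (x : Eu d) (t : ℝ) :
    HasDerivAt (fun s => f (x, s)) (fderiv ℝ f (x, t) (0, 1)) t := by
  have h1 : HasDerivAt (fun s : ℝ => (x, s)) ((0 : Eu d), (1 : ℝ)) t :=
    (hasDerivAt_const t x).prodMk (hasDerivAt_id t)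
  have h2 : HasFDerivAt f (fderiv ℝ f (x, t)) (x, t) :=
    (hf.differentiable (by simp) (x, t)).hasFDerivAt
  exact h2.comp_hasDerivAt t h1

/-- smoothness of p ↦ fderiv f p v -/
lemma contDiff_fderiv_apply {E F'' : Type*} [NormedAddCommGroup E] [NormedSpace ℝ E]
    [NormedAddCommGroup F''] [NormedSpace ℝ F'']
    {f : E → F''} (hf : ContDiff ℝ (⊤ : ℕ∞) f) (v : E) :
    ContDiff ℝ (⊤ : ℕ∞) (fun p => fderiv ℝ f p v) :=
  (hf.fderiv_right (by simp)).clm_apply contDiff_const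

/-- symmetry of second derivatives -/
lemma fderiv_swap {E F'' : Type*} [NormedAddCommGroup E] [NormedSpace ℝ E]
    [NormedAddCommGroup F''] [NormedSpace ℝ F'']
    {f : E → F''} (hf : ContDiff ℝ (⊤ : ℕ∞) f) (q : E) (v w : E) :
    fderiv ℝ (fun p => fderiv ℝ f p v) q w = fderiv ℝ (fun p => fderiv ℝ f p w) q v := by
  have hdf : Differentiable ℝ (fderiv ℝ f) := (hf.fderiv_right (m := (⊤ : ℕ∞)) (by simp)).differentiable (by simp)
  have key : ∀ a b : E, fderiv ℝ (fun p => fderiv ℝ f p a) q b = fderiv ℝ (fderiv ℝ f) q b a := by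
    intro a b
    have h1 : HasFDerivAt (fun p => fderiv ℝ f p a)
        ((ContinuousLinearMap.apply ℝ F'' a).comp (fderiv ℝ (fderiv ℝ f) q)) q :=
      (ContinuousLinearMap.apply ℝ F'' a).hasFDerivAt.comp q (hdf q).hasFDerivAt
    rw [h1.fderiv]; rfl
  rw [key, key]
  have hsym : IsSymmSndFDerivAt ℝ f q := (hf.contDiffAt).isSymmSndFDerivAt (by
    rw [minSmoothness_of_isRCLikeNormedField]; exact WithTop.coe_le_coe.mpr le_top)
  exact hsym w v
lemma hasDerivAt_integral_box {d : ℕ} (G G' : Eu d × ℝ → ℝ)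
    (hG : Continuous G) (hG' : Continuous G')
    (hder : ∀ (x : Eu d) (s : ℝ), HasDerivAt (fun r => G (x, r)) (G' (x, s)) s) (t : ℝ) :
    HasDerivAt (fun s => ∫ x in Box d, G (x, s)) (∫ x in Box d, G' (x, t)) t := by
  set μ := volume.restrict (Box d) with hμ
  have : Fact (μ (Set.univ) < ⊤) := ⟨by
    rw [hμ, Measure.restrict_apply_univ]; exact (isCompact_box d).measure_lt_top⟩
  have : IsFiniteMeasure μ := ⟨this.out⟩
  have hK : IsCompact (Box d ×ˢ Icc (t - 1) (t + 1)) :=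
    (isCompact_box d).prod isCompact_Icc
  obtain ⟨C, hC⟩ := hK.exists_bound_of_continuousOn hG'.continuousOn
  have main := hasDerivAt_integral_of_dominated_loc_of_deriv_le (μ := μ) (𝕜 := ℝ)
    (F := fun s x => G (x, s)) (F' := fun s x => G' (x, s)) (x₀ := t)
    (bound := fun _ => C) (s := Metric.ball t 1) (Metric.ball_mem_nhds t one_pos)
    (Filter.Eventually.of_forall (fun s =>
      (hG.comp (continuous_id.prodMk continuous_const)).aestronglyMeasurable))
    ((hG.comp (continuous_id.prodMk continuous_const)).continuousOn.integrableOn_compact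
      (isCompact_box d))
    ((hG'.comp (continuous_id.prodMk continuous_const)).aestronglyMeasurable)
    ?_ (integrable_const C) ?_
  · exact main.2
  · rw [ae_restrict_iff' (measurableSet_box d)]
    refine Filter.Eventually.of_forall (fun x hx => fun s hs => ?_)
    exact hC (x, s) ⟨hx, by
      have := Metric.mem_ball.mp hs
      rw [Real.dist_eq] at this
      constructor <;> linarith [abs_lt.mp this |>.1, abs_lt.mp this |>.2]⟩
  · exact Filter.Eventually.of_forall (fun x => fun s _ => hder x s)
lemma cont_intOn {d : ℕ} {G' : Type*} [NormedAddCommGroup G'] {h : Eu d → G'} (hh : Continuous h) : IntegrableOn h (Box d) :=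
  hh.continuousOn.integrableOn_compact (isCompact_box d)

lemma grad_inner {d : ℕ} (f : Eu d → ℝ) (x v : Eu d) :
    ⟪gradient f x, v⟫ = fderiv ℝ f x v := by
  simp [gradient, InnerProductSpace.toDual_apply_apply]

lemma inner_eq_sum {d : ℕ} (a b : Eu d) : ⟪a, b⟫ = ∑ i, a i * b i := by
  rw [PiLp.inner_apply]; exact Finset.sum_congr rfl (fun i _ => by simp [mul_comm])

lemma grad_coord {d : ℕ} (f : Eu d → ℝ) (x : Eu d) (i : Fin d) :
    gradient f x i = fderiv ℝ f x (uvec d i) := by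
  have h := grad_inner f x (uvec d i)
  rw [inner_eq_sum] at h
  rw [← h, Finset.sum_eq_single i]
  · simp [uvec]
  · intro j _ hj; simp [uvec, EuclideanSpace.single_apply, hj]
  · simp

/-- coordinate of fderiv of vector field -/
lemma fderiv_coord {d : ℕ} {u : Eu d → Eu d} (hu : ContDiff ℝ (⊤ : ℕ∞) u) (x v : Eu d) (j : Fin d) :
    fderiv ℝ (fun y => u y j) x v = fderiv ℝ u x v j := by
  have h1 : HasFDerivAt (fun y => (EuclideanSpace.proj (𝕜 := ℝ) j) (u y))
      ((EuclideanSpace.proj (𝕜 := ℝ) j).comp (fderiv ℝ u x)) x :=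
    (EuclideanSpace.proj (𝕜 := ℝ) j).hasFDerivAt.comp x (hu.differentiable (by simp) x).hasFDerivAt
  have : (fun y => u y j) = fun y => (EuclideanSpace.proj (𝕜 := ℝ) j) (u y) := rfl
  rw [this, h1.fderiv]; rfl

/-- periodicity is preserved by fderiv -/
lemma fderiv_periodic {d : ℕ} {f : Eu d → F'} (hp : OmegaPeriodic f) (hf : ContDiff ℝ (⊤ : ℕ∞) f) :
    ∀ v, OmegaPeriodic (fun x => fderiv ℝ f x v) := by
  intro v x i
  have hshift : (fun y : Eu d => f (y + (2*π) • uvec d i)) = f := by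
    funext y; exact hp y i
  have hd1 : DifferentiableAt ℝ f (x + (2*π) • uvec d i) := hf.differentiable (by simp) _
  have h2 : HasFDerivAt (fun y : Eu d => y + (2*π) • uvec d i)
      (ContinuousLinearMap.id ℝ (Eu d)) x := by
    simpa using (hasFDerivAt_id x).add_const ((2*π) • uvec d i)
  have h3 : HasFDerivAt (fun y : Eu d => f (y + (2*π) • uvec d i))
      ((fderiv ℝ f (x + (2*π) • uvec d i)).comp (ContinuousLinearMap.id ℝ (Eu d))) x :=
    hd1.hasFDerivAt.comp x h2
  have := h3.fderiv
  rw [hshift] at this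
  simp only [ContinuousLinearMap.comp_id] at this
  show fderiv ℝ f (x + (2 * π) • uvec d i) v = fderiv ℝ f x v
  rw [← this]

lemma periodic_mul {d : ℕ} {f g : Eu d → ℝ} (hf : OmegaPeriodic f) (hg : OmegaPeriodic g) :
    OmegaPeriodic (fun x => f x * g x) := fun x i => by simp [hf x i, hg x i]

lemma periodic_coord {d : ℕ} {u : Eu d → Eu d} (hu : OmegaPeriodic u) (j : Fin d) :
    OmegaPeriodic (fun x => u x j) := fun x i => by
  show u (x + (2 * π) • uvec d i) j = u x j
  rw [hu x i]

/-- basic integration by parts -/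
lemma parts_one {d : ℕ} (hd : d ≠ 0) {f g : Eu d → ℝ} (hf : ContDiff ℝ (⊤ : ℕ∞) f) (hg : ContDiff ℝ (⊤ : ℕ∞) g)
    (hfp : OmegaPeriodic f) (hgp : OmegaPeriodic g) (i : Fin d) :
    ∫ x in Box d, (f x * fderiv ℝ g x (uvec d i) + fderiv ℝ f x (uvec d i) * g x) = 0 := by
  have hmul : ContDiff ℝ (⊤ : ℕ∞) (fun x => f x * g x) := hf.mul hg
  have hper : OmegaPeriodic (fun x => f x * g x) := periodic_mul hfp hgp
  have := ftc_box hd _ hmul hper i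
  rw [← this]
  apply setIntegral_congr_fun (isCompact_box d).isClosed.measurableSet
  intro x _
  show f x * fderiv ℝ g x (uvec d i) + fderiv ℝ f x (uvec d i) * g x
    = fderiv ℝ (fun x => f x * g x) x (uvec d i)
  rw [fderiv_fun_mul (hf.differentiable (by simp) x) (hg.differentiable (by simp) x)]
  simp; ring
lemma contDiff_coord {u : Eu d → Eu d} (hu : ContDiff ℝ (⊤ : ℕ∞) u) (j : Fin d) :
    ContDiff ℝ (⊤ : ℕ∞) (fun y => u y j) :=
  (EuclideanSpace.proj (𝕜 := ℝ) j).contDiff.comp hu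

lemma cont_pd {f : Eu d → ℝ} (hf : ContDiff ℝ (⊤ : ℕ∞) f) (i : Fin d) :
    Continuous (fun x : Eu d => fderiv ℝ f x (uvec d i)) :=
  (contDiff_fderiv_apply hf (uvec d i)).continuous

lemma contDiff_gradient {f : Eu d → ℝ} (hf : ContDiff ℝ (⊤ : ℕ∞) f) :
    ContDiff ℝ (⊤ : ℕ∞) (gradient f) := by
  have : gradient f = fun x => (InnerProductSpace.toDual ℝ (Eu d)).symm (fderiv ℝ f x) := rfl
  rw [this]
  exact (InnerProductSpace.toDual ℝ (Eu d)).symm.contDiff.comp (hf.fderiv_right (by simp))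

lemma periodic_gradient {f : Eu d → ℝ} (hp : OmegaPeriodic f) (hf : ContDiff ℝ (⊤ : ℕ∞) f) :
    OmegaPeriodic (gradient f) := by
  intro x i
  show (InnerProductSpace.toDual ℝ (Eu d)).symm (fderiv ℝ f _)
    = (InnerProductSpace.toDual ℝ (Eu d)).symm (fderiv ℝ f x)
  congr 1
  ext v
  exact fderiv_periodic hp hf v x i

lemma cont_dvg {u : Eu d → Eu d} (hu : ContDiff ℝ (⊤ : ℕ∞) u) : Continuous (dvg u) := by
  apply continuous_finset_sum
  intro i _
  exact ((EuclideanSpace.proj (𝕜 := ℝ) i).continuous).comp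
    (contDiff_fderiv_apply hu (uvec d i)).continuous

/-- C2: ∫ ⟪∇f, u⟫ = -∫ f · div u -/
lemma ibp_grad_dvg (hd : d ≠ 0) {f : Eu d → ℝ} {u : Eu d → Eu d}
    (hf : ContDiff ℝ (⊤ : ℕ∞) f) (hu : ContDiff ℝ (⊤ : ℕ∞) u)
    (hfp : OmegaPeriodic f) (hup : OmegaPeriodic u) :
    ∫ x in Box d, ⟪gradient f x, u x⟫ = -∫ x in Box d, f x * dvg u x := by
  have key : ∀ i : Fin d, ∫ x in Box d,
      (f x * fderiv ℝ u x (uvec d i) i + fderiv ℝ f x (uvec d i) * u x i) = 0 := by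
    intro i
    have := parts_one hd hf (contDiff_coord hu i) hfp (periodic_coord hup i) i
    rw [← this]
    apply setIntegral_congr_fun (isCompact_box d).isClosed.measurableSet
    intro x _
    simp only [fderiv_coord hu x (uvec d i) i]
  have hint : ∀ i : Fin d, IntegrableOn
      (fun x => f x * fderiv ℝ u x (uvec d i) i + fderiv ℝ f x (uvec d i) * u x i) (Box d) := by
    intro i
    apply cont_intOn
    exact ((hf.continuous.mul (((EuclideanSpace.proj (𝕜 := ℝ) i).continuous).comp
      (contDiff_fderiv_apply hu (uvec d i)).continuous)).add
      ((cont_pd hf i).mul (((EuclideanSpace.proj (𝕜 := ℝ) i).continuous).comp hu.continuous)))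
  have hsum : ∫ x in Box d, (∑ i : Fin d,
      (f x * fderiv ℝ u x (uvec d i) i + fderiv ℝ f x (uvec d i) * u x i)) = 0 := by
    rw [integral_finset_sum _ (fun i _ => hint i)]
    exact Finset.sum_eq_zero (fun i _ => key i)
  have hpt : ∀ x : Eu d, (∑ i : Fin d,
      (f x * fderiv ℝ u x (uvec d i) i + fderiv ℝ f x (uvec d i) * u x i))
      = f x * dvg u x + ⟪gradient f x, u x⟫ := by
    intro x
    rw [Finset.sum_add_distrib, ← Finset.mul_sum, inner_eq_sum]
    congr 1
    exact Finset.sum_congr rfl (fun i _ => by rw [grad_coord])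
  rw [setIntegral_congr_fun (isCompact_box d).isClosed.measurableSet (fun x _ => hpt x)] at hsum
  rw [integral_add (f := fun x => f x * dvg u x) (cont_intOn (hf.continuous.mul (cont_dvg hu)))
    (cont_intOn ((contDiff_gradient hf).continuous.inner hu.continuous))] at hsum
  linarith

lemma dvg_grad_eq_lap {f : Eu d → ℝ} (hf : ContDiff ℝ (⊤ : ℕ∞) f) (x : Eu d) :
    dvg (gradient f) x = lap f x := by
  unfold dvg lap
  apply Finset.sum_congr rfl
  intro i _
  rw [← fderiv_coord (contDiff_gradient hf) x (uvec d i) i]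
  have h1 : (fun y => gradient f y i) = fun y => fderiv ℝ f y (uvec d i) :=
    funext (fun y => grad_coord f y i)
  rw [h1]

/-- C1: ∫ ⟪∇f, ∇g⟫ = -∫ f · Δg -/
lemma ibp_grad_grad (hd : d ≠ 0) {f g : Eu d → ℝ}
    (hf : ContDiff ℝ (⊤ : ℕ∞) f) (hg : ContDiff ℝ (⊤ : ℕ∞) g)
    (hfp : OmegaPeriodic f) (hgp : OmegaPeriodic g) :
    ∫ x in Box d, ⟪gradient f x, gradient g x⟫ = -∫ x in Box d, f x * lap g x := by
  rw [ibp_grad_dvg hd hf (contDiff_gradient hg) hfp (periodic_gradient hgp hg)]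
  congr 1
  apply setIntegral_congr_fun (isCompact_box d).isClosed.measurableSet
  intro x _
  show f x * dvg (gradient g) x = f x * lap g x
  rw [dvg_grad_eq_lap hg]

lemma lap_coord {u : Eu d → Eu d} (hu : ContDiff ℝ (⊤ : ℕ∞) u) (x : Eu d) (j : Fin d) :
    lap u x j = lap (fun y => u y j) x := by
  unfold lap
  rw [show (∑ i, fderiv ℝ (fun y => fderiv ℝ u y (uvec d i)) x (uvec d i)) j
      = ∑ i, (fderiv ℝ (fun y => fderiv ℝ u y (uvec d i)) x (uvec d i)) j by
    induction (Finset.univ : Finset (Fin d)) using Finset.induction with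
    | empty => rfl
    | insert _ _ h ih => rw [Finset.sum_insert h, Finset.sum_insert h, ← ih]; rfl]
  apply Finset.sum_congr rfl
  intro i _
  have h1 : (fun y => fderiv ℝ (fun z => u z j) y (uvec d i))
      = fun y => fderiv ℝ u y (uvec d i) j := by
    funext y; exact fderiv_coord hu y (uvec d i) j
  rw [h1]
  have h2 : ContDiff ℝ (⊤ : ℕ∞) (fun y => fderiv ℝ u y (uvec d i)) :=
    contDiff_fderiv_apply hu (uvec d i)
  exact (fderiv_coord (u := fun y => fderiv ℝ u y (uvec d i)) h2 x (uvec d i) j).symm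

/-- C4: ∫ ⟪u, Δu⟫ = -∫ |∇u|² -/
lemma ibp_veclap (hd : d ≠ 0) {u : Eu d → Eu d} (hu : ContDiff ℝ (⊤ : ℕ∞) u)
    (hup : OmegaPeriodic u) :
    ∫ x in Box d, ⟪u x, lap u x⟫ = -∫ x in Box d, gradVSq u x := by
  have hptw : ∀ x : Eu d, ⟪u x, lap u x⟫ = ∑ j, u x j * lap (fun y => u y j) x := by
    intro x
    rw [inner_eq_sum]
    exact Finset.sum_congr rfl (fun j _ => by rw [lap_coord hu])
  have hcontlapj : ∀ j : Fin d, Continuous (fun x => lap (fun y => u y j) x) := by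
    intro j
    apply continuous_finset_sum
    intro i _
    exact (contDiff_fderiv_apply
      (contDiff_fderiv_apply (contDiff_coord hu j) (uvec d i)) (uvec d i)).continuous
  have hintj : ∀ j : Fin d, IntegrableOn (fun x => u x j * lap (fun y => u y j) x) (Box d) :=
    fun j => cont_intOn ((((EuclideanSpace.proj (𝕜 := ℝ) j).continuous).comp hu.continuous).mul
      (hcontlapj j))
  rw [setIntegral_congr_fun (isCompact_box d).isClosed.measurableSet (fun x _ => hptw x),
    integral_finset_sum _ (fun j _ => hintj j)]
  have hj : ∀ j : Fin d, ∫ x in Box d, u x j * lap (fun y => u y j) x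
      = -∫ x in Box d, ⟪gradient (fun y => u y j) x, gradient (fun y => u y j) x⟫ := by
    intro j
    have := ibp_grad_grad hd (contDiff_coord hu j) (contDiff_coord hu j)
      (periodic_coord hup j) (periodic_coord hup j)
    rw [this]; ring
  rw [Finset.sum_congr rfl (fun j _ => hj j)]
  have hgint : ∀ j : Fin d, IntegrableOn
      (fun x => ⟪gradient (fun y => u y j) x, gradient (fun y => u y j) x⟫) (Box d) :=
    fun j => cont_intOn ((contDiff_gradient (contDiff_coord hu j)).continuous.inner
      (contDiff_gradient (contDiff_coord hu j)).continuous)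
  have : ∑ j : Fin d, -∫ x in Box d, ⟪gradient (fun y => u y j) x, gradient (fun y => u y j) x⟫
      = -∫ x in Box d, ∑ j : Fin d, ⟪gradient (fun y => u y j) x, gradient (fun y => u y j) x⟫ := by
    rw [integral_finset_sum _ (fun j _ => hgint j)]
    rw [← Finset.sum_neg_distrib]
  rw [this]
  congr 1
  apply setIntegral_congr_fun (isCompact_box d).isClosed.measurableSet
  intro x _
  show ∑ j : Fin d, ⟪gradient (fun y => u y j) x, gradient (fun y => u y j) x⟫ = gradVSq u x
  unfold gradVSq
  rw [Finset.sum_comm]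
  apply Finset.sum_congr rfl
  intro j _
  rw [inner_eq_sum]
  apply Finset.sum_congr rfl
  intro i _
  rw [grad_coord, fderiv_coord hu x (uvec d i) j]
  ring


/-- C5: advection term vanishes for divergence-free fields -/
lemma ibp_advect (hd : d ≠ 0) {u : Eu d → Eu d} (hu : ContDiff ℝ (⊤ : ℕ∞) u)
    (hup : OmegaPeriodic u) (hdvg : ∀ x, dvg u x = 0) :
    ∫ x in Box d, ⟪u x, conv u u x⟫ = 0 := by
  set q : Eu d → ℝ := fun x => ⟪u x, u x⟫ with hqdef
  have hq : ContDiff ℝ (⊤ : ℕ∞) q := hu.inner ℝ hu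
  have hqp : OmegaPeriodic q := by
    intro x i
    show ⟪u (x + (2*π) • uvec d i), u (x + (2*π) • uvec d i)⟫ = ⟪u x, u x⟫
    rw [hup x i]
  have key : ∀ x v : Eu d, fderiv ℝ q x v = 2 * ⟪u x, fderiv ℝ u x v⟫ := by
    intro x v
    have := fderiv_inner_apply (𝕜 := ℝ) (hu.differentiable (by simp) x)
      (hu.differentiable (by simp) x) v
    rw [hqdef]
    rw [this, real_inner_comm ((fderiv ℝ u x) v) (u x)]
    ring
  have hpt : ∀ x : Eu d, ⟪u x, conv u u x⟫ = (1/2) * ⟪gradient q x, u x⟫ := by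
    intro x
    rw [grad_inner, key]
    unfold conv
    ring
  rw [setIntegral_congr_fun (isCompact_box d).isClosed.measurableSet (fun x _ => hpt x)]
  rw [MeasureTheory.integral_const_mul, ibp_grad_dvg hd hq hu hqp hup]
  have : ∀ x : Eu d, q x * dvg u x = 0 := fun x => by rw [hdvg x, mul_zero]
  rw [setIntegral_congr_fun (isCompact_box d).isClosed.measurableSet (fun x _ => this x)]
  simp



lemma norm_sq_eq_sum_mul {d : ℕ} (a : Eu d) : ‖a‖ ^ 2 = ∑ i, a i * a i := by
  rw [← real_inner_self_eq_norm_sq, inner_eq_sum]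

lemma cont_lap {d : ℕ} {G' : Type*} [NormedAddCommGroup G'] [NormedSpace ℝ G']
    {g : Eu d → G'} (hg : ContDiff ℝ (⊤ : ℕ∞) g) : Continuous (lap g) := by
  apply continuous_finset_sum
  intro i _
  exact (contDiff_fderiv_apply (contDiff_fderiv_apply hg (uvec d i)) (uvec d i)).continuous

lemma lap_slice {d : ℕ} {f : Eu d × ℝ → ℝ} (hf : ContDiff ℝ (⊤ : ℕ∞) f) (t : ℝ) (x : Eu d) :
    lap (fun y => f (y, t)) x
      = ∑ i, fderiv ℝ (fun p => fderiv ℝ f p (uvec d i, 0)) (x, t) (uvec d i, 0) := by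
  unfold lap
  apply Finset.sum_congr rfl
  intro i _
  have h1 : (fun y => fderiv ℝ (fun z => f (z, t)) y (uvec d i))
      = fun y => (fun p => fderiv ℝ f p (uvec d i, 0)) (y, t) :=
    funext (fun y => fderiv_slice hf t y (uvec d i))
  rw [h1, fderiv_slice (contDiff_fderiv_apply hf (uvec d i, 0)) t x (uvec d i)]

lemma periodic_Dt {d : ℕ} {f : Eu d × ℝ → ℝ} (hf : ContDiff ℝ (⊤ : ℕ∞) f)
    (hp : ∀ s : ℝ, OmegaPeriodic (fun y => f (y, s))) (t : ℝ) :
    OmegaPeriodic (fun y => fderiv ℝ f (y, t) (0, 1)) := by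
  intro x i
  show fderiv ℝ f (x + (2 * π) • uvec d i, t) (0, 1) = fderiv ℝ f (x, t) (0, 1)
  rw [← (hasDerivAt_slice hf (x + (2 * π) • uvec d i) t).deriv,
    ← (hasDerivAt_slice hf x t).deriv]
  congr 1
  funext s
  exact hp s x i


set_option maxHeartbeats 2000000 in
/-- Energy dissipation law (3.38) of the IEQ-transformed PF-BCP-NS system. -/
theorem energy_dissipation_IEQ_PFBCP_NS {d : ℕ} (hd : d = 2 ∨ d = 3)
    (ε α M ν lam T : ℝ) (hε : 0 < ε) (hα : 0 < α) (hM : 0 < M)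
    (hν : 0 < ν) (hlam : 0 < lam) (hT : 0 < T)
    (u : Eu d × ℝ → Eu d) (p φ w U ψ : Eu d × ℝ → ℝ)
    (hus : ContDiff ℝ (⊤ : ℕ∞) u) (hps : ContDiff ℝ (⊤ : ℕ∞) p) (hφs : ContDiff ℝ (⊤ : ℕ∞) φ)
    (hws : ContDiff ℝ (⊤ : ℕ∞) w) (hUs : ContDiff ℝ (⊤ : ℕ∞) U) (hψs : ContDiff ℝ (⊤ : ℕ∞) ψ)
    (hup : ∀ t : ℝ, OmegaPeriodic (fun x => u (x, t)))
    (hpp : ∀ t : ℝ, OmegaPeriodic (fun x => p (x, t)))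
    (hφp : ∀ t : ℝ, OmegaPeriodic (fun x => φ (x, t)))
    (hwp : ∀ t : ℝ, OmegaPeriodic (fun x => w (x, t)))
    (hUp : ∀ t : ℝ, OmegaPeriodic (fun x => U (x, t)))
    (hψp : ∀ t : ℝ, OmegaPeriodic (fun x => ψ (x, t)))
    (heq1 : ∀ (x : Eu d), ∀ t ∈ Icc (0:ℝ) T,
      deriv (fun s => φ (x, s)) t + dvg (fun y => φ (y, t) • u (y, t)) x
        = M * lap (fun y => w (y, t)) x)
    (heq2 : ∀ (x : Eu d), ∀ t ∈ Icc (0:ℝ) T,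
      w (x, t) = lam * (-ε ^ 2 * lap (fun y => φ (y, t)) x
        + φ (x, t) * U (x, t) + α * ψ (x, t)))
    (heq3 : ∀ (x : Eu d), ∀ t ∈ Icc (0:ℝ) T,
      deriv (fun s => U (x, s)) t = 2 * φ (x, t) * deriv (fun s => φ (x, s)) t)
    (heq4 : ∀ (x : Eu d), ∀ t ∈ Icc (0:ℝ) T,
      deriv (fun s => u (x, s)) t
        + conv (fun y => u (y, t)) (fun y => u (y, t)) x
        + gradient (fun y => p (y, t)) x
        - ν • lap (fun y => u (y, t)) x
        + φ (x, t) • gradient (fun y => w (y, t)) x = 0)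
    (heq5 : ∀ (x : Eu d), ∀ t ∈ Icc (0:ℝ) T, dvg (fun y => u (y, t)) x = 0)
    (hψeq : ∀ (x : Eu d), ∀ t ∈ Icc (0:ℝ) T,
      -lap (fun y => ψ (y, t)) x = φ (x, t) - avg (fun y => φ (y, t)))
    (hψmean : ∀ t ∈ Icc (0:ℝ) T, (∫ x in Box d, ψ (x, t)) = 0) :
    ∀ t ∈ Ioo (0:ℝ) T,
      HasDerivAt (fun s => ∫ x in Box d,
          (1 / 2 * ‖u (x, s)‖ ^ 2
            + lam * (ε ^ 2 / 2 * ‖gradient (fun y => φ (y, s)) x‖ ^ 2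
              + 1 / 4 * (U (x, s)) ^ 2
              + α / 2 * ‖gradient (fun y => ψ (y, s)) x‖ ^ 2)))
        (-(M * ∫ x in Box d, ‖gradient (fun y => w (y, t)) x‖ ^ 2)
          - ν * ∫ x in Box d, gradVSq (fun y => u (y, t)) x) t := by
  intro t ht
  have hd0 : d ≠ 0 := by rcases hd with h | h <;> omega
  have htI : t ∈ Icc (0:ℝ) T := ⟨ht.1.le, ht.2.le⟩
  have hmeas : MeasurableSet (Box d) := (isCompact_box d).isClosed.measurableSet
  -- continuity of joint derivative atoms
  have hDtφs : ContDiff ℝ (⊤ : ℕ∞) (fun p : Eu d × ℝ => fderiv ℝ φ p (0, 1)) :=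
    contDiff_fderiv_apply hφs (0, 1)
  have hDtψs : ContDiff ℝ (⊤ : ℕ∞) (fun p : Eu d × ℝ => fderiv ℝ ψ p (0, 1)) :=
    contDiff_fderiv_apply hψs (0, 1)
  -- the energy integrand written in joint coordinates
  set G : Eu d × ℝ → ℝ := fun p =>
    1/2 * ∑ j, (u p j * u p j)
    + lam * (ε^2/2 * ∑ i, (fderiv ℝ φ p (uvec d i, 0) * fderiv ℝ φ p (uvec d i, 0))
      + 1/4 * (U p * U p)
      + α/2 * ∑ i, (fderiv ℝ ψ p (uvec d i, 0) * fderiv ℝ ψ p (uvec d i, 0))) with hGdef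
  set G' : Eu d × ℝ → ℝ := fun p =>
    1/2 * ∑ j, (fderiv ℝ u p (0,1) j * u p j + u p j * fderiv ℝ u p (0,1) j)
    + lam * (ε^2/2 * ∑ i, (fderiv ℝ (fun q : Eu d × ℝ => fderiv ℝ φ q (0,1)) p (uvec d i, 0)
            * fderiv ℝ φ p (uvec d i, 0)
          + fderiv ℝ φ p (uvec d i, 0)
            * fderiv ℝ (fun q : Eu d × ℝ => fderiv ℝ φ q (0,1)) p (uvec d i, 0))
      + 1/4 * (fderiv ℝ U p (0,1) * U p + U p * fderiv ℝ U p (0,1))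
      + α/2 * ∑ i, (fderiv ℝ (fun q : Eu d × ℝ => fderiv ℝ ψ q (0,1)) p (uvec d i, 0)
            * fderiv ℝ ψ p (uvec d i, 0)
          + fderiv ℝ ψ p (uvec d i, 0)
            * fderiv ℝ (fun q : Eu d × ℝ => fderiv ℝ ψ q (0,1)) p (uvec d i, 0))) with hG'def
  have hGc : Continuous G := by
    rw [hGdef]
    refine Continuous.add (continuous_const.mul (continuous_finset_sum _ (fun j _ => ?_)))
      (continuous_const.mul (Continuous.add (Continuous.add
        (continuous_const.mul (continuous_finset_sum _ (fun i _ => ?_)))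
        (continuous_const.mul (hUs.continuous.mul hUs.continuous)))
        (continuous_const.mul (continuous_finset_sum _ (fun i _ => ?_)))))
    · exact ((EuclideanSpace.proj (𝕜 := ℝ) j).continuous.comp hus.continuous).mul
        ((EuclideanSpace.proj (𝕜 := ℝ) j).continuous.comp hus.continuous)
    · exact (contDiff_fderiv_apply hφs (uvec d i, 0)).continuous.mul
        (contDiff_fderiv_apply hφs (uvec d i, 0)).continuous
    · exact (contDiff_fderiv_apply hψs (uvec d i, 0)).continuous.mul
        (contDiff_fderiv_apply hψs (uvec d i, 0)).continuous
  have hG'c : Continuous G' := by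
    rw [hG'def]
    refine Continuous.add (continuous_const.mul (continuous_finset_sum _ (fun j _ => ?_)))
      (continuous_const.mul (Continuous.add (Continuous.add
        (continuous_const.mul (continuous_finset_sum _ (fun i _ => ?_)))
        (continuous_const.mul (((contDiff_fderiv_apply hUs (0,1)).continuous.mul
          hUs.continuous).add (hUs.continuous.mul (contDiff_fderiv_apply hUs (0,1)).continuous))))
        (continuous_const.mul (continuous_finset_sum _ (fun i _ => ?_)))))
    · exact (((EuclideanSpace.proj (𝕜 := ℝ) j).continuous.comp
          (contDiff_fderiv_apply hus (0,1)).continuous).mul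
          ((EuclideanSpace.proj (𝕜 := ℝ) j).continuous.comp hus.continuous)).add
        (((EuclideanSpace.proj (𝕜 := ℝ) j).continuous.comp hus.continuous).mul
          ((EuclideanSpace.proj (𝕜 := ℝ) j).continuous.comp
          (contDiff_fderiv_apply hus (0,1)).continuous))
    · exact ((contDiff_fderiv_apply hDtφs (uvec d i, 0)).continuous.mul
          (contDiff_fderiv_apply hφs (uvec d i, 0)).continuous).add
        ((contDiff_fderiv_apply hφs (uvec d i, 0)).continuous.mul
          (contDiff_fderiv_apply hDtφs (uvec d i, 0)).continuous)
    · exact ((contDiff_fderiv_apply hDtψs (uvec d i, 0)).continuous.mul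
          (contDiff_fderiv_apply hψs (uvec d i, 0)).continuous).add
        ((contDiff_fderiv_apply hψs (uvec d i, 0)).continuous.mul
          (contDiff_fderiv_apply hDtψs (uvec d i, 0)).continuous)
  have hder : ∀ (x : Eu d) (s : ℝ), HasDerivAt (fun r => G (x, r)) (G' (x, s)) s := by
    intro x s
    have hu1 : ∀ j : Fin d, HasDerivAt (fun r => u (x, r) j) (fderiv ℝ u (x, s) (0,1) j) s :=
      fun j => (EuclideanSpace.proj (𝕜 := ℝ) j).hasFDerivAt.comp_hasDerivAt s
        (hasDerivAt_slice hus x s)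
    have hφ1 : ∀ i : Fin d, HasDerivAt (fun r => fderiv ℝ φ (x, r) (uvec d i, 0))
        (fderiv ℝ (fun q : Eu d × ℝ => fderiv ℝ φ q (0,1)) (x, s) (uvec d i, 0)) s := by
      intro i
      have h := hasDerivAt_slice (contDiff_fderiv_apply hφs (uvec d i, 0)) x s
      rwa [fderiv_swap hφs (x, s) (uvec d i, 0) (0, 1)] at h
    have hψ1 : ∀ i : Fin d, HasDerivAt (fun r => fderiv ℝ ψ (x, r) (uvec d i, 0))
        (fderiv ℝ (fun q : Eu d × ℝ => fderiv ℝ ψ q (0,1)) (x, s) (uvec d i, 0)) s := by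
      intro i
      have h := hasDerivAt_slice (contDiff_fderiv_apply hψs (uvec d i, 0)) x s
      rwa [fderiv_swap hψs (x, s) (uvec d i, 0) (0, 1)] at h
    have hU1 : HasDerivAt (fun r => U (x, r)) (fderiv ℝ U (x, s) (0,1)) s :=
      hasDerivAt_slice hUs x s
    have hsqu := HasDerivAt.fun_sum (u := Finset.univ)
      (fun (j : Fin d) _ => (hu1 j).mul (hu1 j))
    have hsqφ := HasDerivAt.fun_sum (u := Finset.univ)
      (fun (i : Fin d) _ => (hφ1 i).mul (hφ1 i))
    have hsqψ := HasDerivAt.fun_sum (u := Finset.univ)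
      (fun (i : Fin d) _ => (hψ1 i).mul (hψ1 i))
    exact (hsqu.const_mul (1/2)).add ((((hsqφ.const_mul (ε^2/2)).add
      ((hU1.mul hU1).const_mul (1/4))).add (hsqψ.const_mul (α/2))).const_mul lam)
  have hkey := hasDerivAt_integral_box G G' hGc hG'c hder t
  -- identify the energy functional with ∫ G
  have hfeq : (fun s => ∫ x in Box d,
      (1 / 2 * ‖u (x, s)‖ ^ 2
        + lam * (ε ^ 2 / 2 * ‖gradient (fun y => φ (y, s)) x‖ ^ 2
          + 1 / 4 * (U (x, s)) ^ 2
          + α / 2 * ‖gradient (fun y => ψ (y, s)) x‖ ^ 2)))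
      = (fun s => ∫ x in Box d, G (x, s)) := by
    funext s
    congr 1
    funext x
    rw [hGdef]
    simp only
    rw [norm_sq_eq_sum_mul (u (x, s)), norm_sq_eq_sum_mul (gradient (fun y => φ (y, s)) x),
      norm_sq_eq_sum_mul (gradient (fun y => ψ (y, s)) x)]
    have hgφ : ∑ i, gradient (fun y => φ (y, s)) x i * gradient (fun y => φ (y, s)) x i
        = ∑ i, fderiv ℝ φ (x, s) (uvec d i, 0) * fderiv ℝ φ (x, s) (uvec d i, 0) :=
      Finset.sum_congr rfl (fun i _ => by rw [grad_coord, fderiv_slice hφs s x (uvec d i)])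
    have hgψ : ∑ i, gradient (fun y => ψ (y, s)) x i * gradient (fun y => ψ (y, s)) x i
        = ∑ i, fderiv ℝ ψ (x, s) (uvec d i, 0) * fderiv ℝ ψ (x, s) (uvec d i, 0) :=
      Finset.sum_congr rfl (fun i _ => by rw [grad_coord, fderiv_slice hψs s x (uvec d i)])
    rw [hgφ, hgψ]
    ring
  rw [hfeq]
  -- it remains to identify the derivative value
  -- slice regularity
  have hufs : ContDiff ℝ (⊤ : ℕ∞) (fun y => u (y, t)) := contDiff_slice hus t
  have hpfs : ContDiff ℝ (⊤ : ℕ∞) (fun y => p (y, t)) := contDiff_slice hps t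
  have hφfs : ContDiff ℝ (⊤ : ℕ∞) (fun y => φ (y, t)) := contDiff_slice hφs t
  have hwfs : ContDiff ℝ (⊤ : ℕ∞) (fun y => w (y, t)) := contDiff_slice hws t
  have hUfs : ContDiff ℝ (⊤ : ℕ∞) (fun y => U (y, t)) := contDiff_slice hUs t
  have hψfs : ContDiff ℝ (⊤ : ℕ∞) (fun y => ψ (y, t)) := contDiff_slice hψs t
  have hφts : ContDiff ℝ (⊤ : ℕ∞) (fun y => fderiv ℝ φ (y, t) (0, 1)) := contDiff_slice hDtφs t
  have hψts : ContDiff ℝ (⊤ : ℕ∞) (fun y => fderiv ℝ ψ (y, t) (0, 1)) := contDiff_slice hDtψs t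
  have hBs : ContDiff ℝ (⊤ : ℕ∞) (fun y => φ (y, t) • u (y, t)) := contDiff_slice (hφs.smul hus) t
  have hBp : OmegaPeriodic (fun y => φ (y, t) • u (y, t)) := by
    intro x i
    show φ (x + (2 * π) • uvec d i, t) • u (x + (2 * π) • uvec d i, t) = φ (x, t) • u (x, t)
    rw [show φ (x + (2 * π) • uvec d i, t) = φ (x, t) from hφp t x i,
      show u (x + (2 * π) • uvec d i, t) = u (x, t) from hup t x i]
  have hudotc : Continuous (fun y : Eu d => fderiv ℝ u (y, t) (0, 1)) :=
    (contDiff_slice (contDiff_fderiv_apply hus (0, 1)) t).continuous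
  have hdvg0 : ∀ x : Eu d, dvg (fun y => u (y, t)) x = 0 := fun x => heq5 x t htI
  have hval : ∫ x in Box d, G' (x, t)
      = -(M * ∫ x in Box d, ‖gradient (fun y => w (y, t)) x‖ ^ 2)
        - ν * ∫ x in Box d, gradVSq (fun y => u (y, t)) x := by
    -- pointwise form of G'(·,t)
    have hG't : ∀ x : Eu d, G' (x, t)
        = ⟪u (x, t), fderiv ℝ u (x, t) (0, 1)⟫
          + lam * (ε ^ 2 * ⟪gradient (fun y => fderiv ℝ φ (y, t) (0, 1)) x,
              gradient (fun y => φ (y, t)) x⟫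
            + 1 / 2 * (U (x, t) * fderiv ℝ U (x, t) (0, 1))
            + α * ⟪gradient (fun y => ψ (y, t)) x,
              gradient (fun y => fderiv ℝ ψ (y, t) (0, 1)) x⟫) := by
      intro x
      rw [hG'def]
      simp only
      have c1 : ∑ j, (fderiv ℝ u (x, t) (0,1) j * u (x, t) j
            + u (x, t) j * fderiv ℝ u (x, t) (0,1) j)
          = 2 * ∑ j, (u (x, t) j * fderiv ℝ u (x, t) (0,1) j) := by
        rw [Finset.mul_sum]
        exact Finset.sum_congr rfl (fun j _ => by ring)
      have c2 : ∑ i, (fderiv ℝ (fun q : Eu d × ℝ => fderiv ℝ φ q (0,1)) (x, t) (uvec d i, 0)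
              * fderiv ℝ φ (x, t) (uvec d i, 0)
            + fderiv ℝ φ (x, t) (uvec d i, 0)
              * fderiv ℝ (fun q : Eu d × ℝ => fderiv ℝ φ q (0,1)) (x, t) (uvec d i, 0))
          = 2 * ∑ i, (gradient (fun y => fderiv ℝ φ (y, t) (0, 1)) x i
              * gradient (fun y => φ (y, t)) x i) := by
        rw [Finset.mul_sum]
        refine Finset.sum_congr rfl (fun i _ => ?_)
        rw [grad_coord, grad_coord, fderiv_slice hDtφs t x (uvec d i),
          fderiv_slice hφs t x (uvec d i)]
        ring
      have c3 : ∑ i, (fderiv ℝ (fun q : Eu d × ℝ => fderiv ℝ ψ q (0,1)) (x, t) (uvec d i, 0)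
              * fderiv ℝ ψ (x, t) (uvec d i, 0)
            + fderiv ℝ ψ (x, t) (uvec d i, 0)
              * fderiv ℝ (fun q : Eu d × ℝ => fderiv ℝ ψ q (0,1)) (x, t) (uvec d i, 0))
          = 2 * ∑ i, (gradient (fun y => ψ (y, t)) x i
              * gradient (fun y => fderiv ℝ ψ (y, t) (0, 1)) x i) := by
        rw [Finset.mul_sum]
        refine Finset.sum_congr rfl (fun i _ => ?_)
        rw [grad_coord, grad_coord, fderiv_slice hDtψs t x (uvec d i),
          fderiv_slice hψs t x (uvec d i)]
        ring
      rw [c1, c2, c3, inner_eq_sum, inner_eq_sum, inner_eq_sum]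
      ring
    -- integrability of the four pieces
    have iA : IntegrableOn (fun x : Eu d => ⟪u (x, t), fderiv ℝ u (x, t) (0, 1)⟫) (Box d) :=
      cont_intOn (hufs.continuous.inner hudotc)
    have iB : IntegrableOn (fun x : Eu d => ⟪gradient (fun y => fderiv ℝ φ (y, t) (0, 1)) x,
        gradient (fun y => φ (y, t)) x⟫) (Box d) :=
      cont_intOn ((contDiff_gradient hφts).continuous.inner (contDiff_gradient hφfs).continuous)
    have iC : IntegrableOn (fun x : Eu d => U (x, t) * fderiv ℝ U (x, t) (0, 1)) (Box d) :=
      cont_intOn (hUfs.continuous.mul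
        (contDiff_slice (contDiff_fderiv_apply hUs (0, 1)) t).continuous)
    have iD : IntegrableOn (fun x : Eu d => ⟪gradient (fun y => ψ (y, t)) x,
        gradient (fun y => fderiv ℝ ψ (y, t) (0, 1)) x⟫) (Box d) :=
      cont_intOn ((contDiff_gradient hψfs).continuous.inner (contDiff_gradient hψts).continuous)
    have iBC : IntegrableOn (fun x : Eu d =>
        ε ^ 2 * ⟪gradient (fun y => fderiv ℝ φ (y, t) (0, 1)) x,
          gradient (fun y => φ (y, t)) x⟫
        + 1 / 2 * (U (x, t) * fderiv ℝ U (x, t) (0, 1))) (Box d) :=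
      (iB.const_mul (ε ^ 2)).add (iC.const_mul (1/2))
    have iBCD : IntegrableOn (fun x : Eu d =>
        ε ^ 2 * ⟪gradient (fun y => fderiv ℝ φ (y, t) (0, 1)) x,
          gradient (fun y => φ (y, t)) x⟫
        + 1 / 2 * (U (x, t) * fderiv ℝ U (x, t) (0, 1))
        + α * ⟪gradient (fun y => ψ (y, t)) x,
          gradient (fun y => fderiv ℝ ψ (y, t) (0, 1)) x⟫) (Box d) :=
      iBC.add (iD.const_mul α)
    have iLam : IntegrableOn (fun x : Eu d =>
        lam * (ε ^ 2 * ⟪gradient (fun y => fderiv ℝ φ (y, t) (0, 1)) x,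
          gradient (fun y => φ (y, t)) x⟫
        + 1 / 2 * (U (x, t) * fderiv ℝ U (x, t) (0, 1))
        + α * ⟪gradient (fun y => ψ (y, t)) x,
          gradient (fun y => fderiv ℝ ψ (y, t) (0, 1)) x⟫)) (Box d) :=
      iBCD.const_mul lam
    rw [setIntegral_congr_fun hmeas (fun x _ => hG't x)]
    rw [integral_add iA iLam]
    rw [MeasureTheory.integral_const_mul lam]
    rw [integral_add iBC (iD.const_mul α)]
    rw [integral_add (iB.const_mul (ε ^ 2)) (iC.const_mul (1/2))]
    rw [MeasureTheory.integral_const_mul (ε ^ 2), MeasureTheory.integral_const_mul (1/2),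
      MeasureTheory.integral_const_mul α]
    -- evaluate the kinetic part
    have hudot : ∀ x : Eu d, fderiv ℝ u (x, t) (0, 1)
        = ν • lap (fun y => u (y, t)) x - conv (fun y => u (y, t)) (fun y => u (y, t)) x
          - gradient (fun y => p (y, t)) x - φ (x, t) • gradient (fun y => w (y, t)) x := by
      intro x
      have h := heq4 x t htI
      rw [show deriv (fun s => u (x, s)) t = fderiv ℝ u (x, t) (0, 1) from
        (hasDerivAt_slice hus x t).deriv] at h
      linear_combination (norm := module) h
    have hApt : ∀ x : Eu d, ⟪u (x, t), fderiv ℝ u (x, t) (0, 1)⟫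
        = ν * ⟪u (x, t), lap (fun y => u (y, t)) x⟫
          - ⟪u (x, t), conv (fun y => u (y, t)) (fun y => u (y, t)) x⟫
          - ⟪gradient (fun y => p (y, t)) x, u (x, t)⟫
          - ⟪gradient (fun y => w (y, t)) x, φ (x, t) • u (x, t)⟫ := by
      intro x
      rw [hudot x, inner_sub_right, inner_sub_right, inner_sub_right,
        real_inner_smul_right, real_inner_smul_right,
        real_inner_comm (gradient (fun y => p (y, t)) x) (u (x, t)),
        real_inner_smul_right, real_inner_comm (gradient (fun y => w (y, t)) x) (u (x, t))]
    have iA1 : IntegrableOn (fun x : Eu d =>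
        ⟪u (x, t), lap (fun y => u (y, t)) x⟫) (Box d) :=
      cont_intOn (hufs.continuous.inner (cont_lap hufs))
    have iA2 : IntegrableOn (fun x : Eu d =>
        ⟪u (x, t), conv (fun y => u (y, t)) (fun y => u (y, t)) x⟫) (Box d) :=
      cont_intOn (hufs.continuous.inner
        (((hufs.fderiv_right (m := (⊤ : ℕ∞)) (by simp)).continuous).clm_apply hufs.continuous))
    have iA3 : IntegrableOn (fun x : Eu d =>
        ⟪gradient (fun y => p (y, t)) x, u (x, t)⟫) (Box d) :=
      cont_intOn ((contDiff_gradient hpfs).continuous.inner hufs.continuous)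
    have iA4 : IntegrableOn (fun x : Eu d =>
        ⟪gradient (fun y => w (y, t)) x, φ (x, t) • u (x, t)⟫) (Box d) :=
      cont_intOn ((contDiff_gradient hwfs).continuous.inner
        (hφfs.continuous.smul hufs.continuous))
    have hAeq : ∫ x in Box d, ⟪u (x, t), fderiv ℝ u (x, t) (0, 1)⟫
        = -(ν * ∫ x in Box d, gradVSq (fun y => u (y, t)) x)
          + ∫ x in Box d, w (x, t) * dvg (fun y => φ (y, t) • u (y, t)) x := by
      have iS1 : IntegrableOn (fun x : Eu d =>
          ν * ⟪u (x, t), lap (fun y => u (y, t)) x⟫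
          - ⟪u (x, t), conv (fun y => u (y, t)) (fun y => u (y, t)) x⟫) (Box d) :=
        (iA1.const_mul ν).sub iA2
      have iS2 : IntegrableOn (fun x : Eu d =>
          ν * ⟪u (x, t), lap (fun y => u (y, t)) x⟫
          - ⟪u (x, t), conv (fun y => u (y, t)) (fun y => u (y, t)) x⟫
          - ⟪gradient (fun y => p (y, t)) x, u (x, t)⟫) (Box d) :=
        iS1.sub iA3
      rw [setIntegral_congr_fun hmeas (fun x _ => hApt x)]
      rw [integral_sub iS2 iA4, integral_sub iS1 iA3,
        integral_sub (iA1.const_mul ν) iA2, MeasureTheory.integral_const_mul ν]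
      rw [ibp_veclap hd0 hufs (hup t)]
      rw [ibp_advect hd0 hufs (hup t) hdvg0]
      rw [ibp_grad_dvg hd0 hpfs hufs (hpp t) (hup t)]
      rw [ibp_grad_dvg hd0 hwfs hBs (hwp t) hBp]
      have hz : ∫ x in Box d, p (x, t) * dvg (fun y => u (y, t)) x = 0 := by
        rw [setIntegral_congr_fun hmeas
          (fun x _ => by rw [hdvg0 x, mul_zero] :
            ∀ x ∈ Box d, p (x, t) * dvg (fun y => u (y, t)) x = (0:ℝ))]
        simp
      rw [hz]
      ring
    rw [hAeq]
    -- evaluate the φ-gradient part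
    have hBeq : ∫ x in Box d, ⟪gradient (fun y => fderiv ℝ φ (y, t) (0, 1)) x,
        gradient (fun y => φ (y, t)) x⟫
        = -∫ x in Box d, fderiv ℝ φ (x, t) (0, 1) * lap (fun y => φ (y, t)) x :=
      ibp_grad_grad hd0 hφts hφfs (periodic_Dt hφs hφp t) (hφp t)
    rw [hBeq]
    -- evaluate the U part
    have hCpt : ∀ x : Eu d, U (x, t) * fderiv ℝ U (x, t) (0, 1)
        = 2 * (fderiv ℝ φ (x, t) (0, 1) * (φ (x, t) * U (x, t))) := by
      intro x
      have h3 := heq3 x t htI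
      rw [show deriv (fun s => U (x, s)) t = fderiv ℝ U (x, t) (0, 1) from
        (hasDerivAt_slice hUs x t).deriv,
        show deriv (fun s => φ (x, s)) t = fderiv ℝ φ (x, t) (0, 1) from
        (hasDerivAt_slice hφs x t).deriv] at h3
      rw [h3]; ring
    have hCeq : ∫ x in Box d, U (x, t) * fderiv ℝ U (x, t) (0, 1)
        = 2 * ∫ x in Box d, fderiv ℝ φ (x, t) (0, 1) * (φ (x, t) * U (x, t)) := by
      rw [setIntegral_congr_fun hmeas (fun x _ => hCpt x), MeasureTheory.integral_const_mul]
    rw [hCeq]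
    -- evaluate the ψ part
    have hDeq1 : ∫ x in Box d, ⟪gradient (fun y => ψ (y, t)) x,
        gradient (fun y => fderiv ℝ ψ (y, t) (0, 1)) x⟫
        = -∫ x in Box d, ψ (x, t) * lap (fun y => fderiv ℝ ψ (y, t) (0, 1)) x :=
      ibp_grad_grad hd0 hψfs hψts (hψp t) (periodic_Dt hψs hψp t)
    -- the time derivative of the ψ-equation
    have havgD : HasDerivAt (fun s => avg (fun y => φ (y, s)))
        ((volume (Box d)).toReal⁻¹ * ∫ x in Box d, fderiv ℝ φ (x, t) (0, 1)) t := by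
      have hbase := hasDerivAt_integral_box φ (fun q => fderiv ℝ φ q (0, 1))
        hφs.continuous hDtφs.continuous (fun x s => hasDerivAt_slice hφs x s) t
      exact hbase.const_mul ((volume (Box d)).toReal⁻¹)
    have hlapder : ∀ x : Eu d, HasDerivAt (fun s => lap (fun y => ψ (y, s)) x)
        (lap (fun y => fderiv ℝ ψ (y, t) (0, 1)) x) t := by
      intro x
      have hfun : (fun s => lap (fun y => ψ (y, s)) x)
          = fun s => ∑ i, fderiv ℝ (fun q : Eu d × ℝ => fderiv ℝ ψ q (uvec d i, 0)) (x, s)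
            (uvec d i, 0) := funext (fun s => lap_slice hψs s x)
      rw [hfun]
      have hsum := HasDerivAt.fun_sum (u := Finset.univ) (A := fun (i : Fin d) s =>
          fderiv ℝ (fun q : Eu d × ℝ => fderiv ℝ ψ q (uvec d i, 0)) (x, s) (uvec d i, 0))
        (fun (i : Fin d) _ => hasDerivAt_slice
          (contDiff_fderiv_apply (contDiff_fderiv_apply hψs (uvec d i, 0)) (uvec d i, 0)) x t)
      refine hsum.congr_deriv ?_
      rw [lap_slice hDtψs t x]
      refine Finset.sum_congr rfl (fun i _ => ?_)
      have e1 : (fun q : Eu d × ℝ => fderiv ℝ (fun r : Eu d × ℝ => fderiv ℝ ψ r (0, 1)) q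
            (uvec d i, 0))
          = fun q : Eu d × ℝ => fderiv ℝ (fun r : Eu d × ℝ => fderiv ℝ ψ r (uvec d i, 0))
            q (0, 1) :=
        funext (fun q => fderiv_swap hψs q (0, 1) (uvec d i, 0))
      rw [e1]
      exact (fderiv_swap (contDiff_fderiv_apply hψs (uvec d i, 0)) (x, t) (0, 1) (uvec d i, 0)).symm
    have hlapeq : ∀ x : Eu d, lap (fun y => fderiv ℝ ψ (y, t) (0, 1)) x
        = ((volume (Box d)).toReal⁻¹ * ∫ x in Box d, fderiv ℝ φ (x, t) (0, 1))
          - fderiv ℝ φ (x, t) (0, 1) := by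
      intro x
      have hEE : (fun s => avg (fun y => φ (y, s)) - φ (x, s))
          =ᶠ[nhds t] (fun s => lap (fun y => ψ (y, s)) x) := by
        filter_upwards [Icc_mem_nhds ht.1 ht.2] with s hs
        have := hψeq x s hs
        linarith
      have h2' : HasDerivAt (fun s => lap (fun y => ψ (y, s)) x)
          (((volume (Box d)).toReal⁻¹ * ∫ x in Box d, fderiv ℝ φ (x, t) (0, 1))
            - fderiv ℝ φ (x, t) (0, 1)) t :=
        ((havgD.sub (hasDerivAt_slice hφs x t)).congr_of_eventuallyEq hEE.symm)
      exact (hlapder x).unique h2'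
    have iψ : IntegrableOn (fun x : Eu d => ψ (x, t)) (Box d) := cont_intOn hψfs.continuous
    have iψφt : IntegrableOn (fun x : Eu d => ψ (x, t) * fderiv ℝ φ (x, t) (0, 1)) (Box d) :=
      cont_intOn (hψfs.continuous.mul
        (contDiff_slice (contDiff_fderiv_apply hφs (0, 1)) t).continuous)
    have hDeq : ∫ x in Box d, ⟪gradient (fun y => ψ (y, t)) x,
        gradient (fun y => fderiv ℝ ψ (y, t) (0, 1)) x⟫
        = ∫ x in Box d, ψ (x, t) * fderiv ℝ φ (x, t) (0, 1) := by
      rw [hDeq1]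
      have hpt : ∀ x : Eu d, ψ (x, t) * lap (fun y => fderiv ℝ ψ (y, t) (0, 1)) x
          = ((volume (Box d)).toReal⁻¹ * ∫ x in Box d, fderiv ℝ φ (x, t) (0, 1)) * ψ (x, t)
            - ψ (x, t) * fderiv ℝ φ (x, t) (0, 1) := by
        intro x
        rw [hlapeq x]
        ring
      rw [setIntegral_congr_fun hmeas (fun x _ => hpt x)]
      rw [integral_sub (iψ.const_mul _) iψφt, MeasureTheory.integral_const_mul,
        hψmean t htI]
      ring
    rw [hDeq]
    -- combine the λ-part using the chemical potential equation
    have iφtlap : IntegrableOn (fun x : Eu d =>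
        fderiv ℝ φ (x, t) (0, 1) * lap (fun y => φ (y, t)) x) (Box d) :=
      cont_intOn ((contDiff_slice (contDiff_fderiv_apply hφs (0, 1)) t).continuous.mul
        (cont_lap hφfs))
    have iφtφU : IntegrableOn (fun x : Eu d =>
        fderiv ℝ φ (x, t) (0, 1) * (φ (x, t) * U (x, t))) (Box d) :=
      cont_intOn ((contDiff_slice (contDiff_fderiv_apply hφs (0, 1)) t).continuous.mul
        (hφfs.continuous.mul hUfs.continuous))
    have hwsum : ∫ x in Box d, fderiv ℝ φ (x, t) (0, 1) * w (x, t)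
        = lam * (ε ^ 2 * -(∫ x in Box d, fderiv ℝ φ (x, t) (0, 1) * lap (fun y => φ (y, t)) x)
          + (∫ x in Box d, fderiv ℝ φ (x, t) (0, 1) * (φ (x, t) * U (x, t)))
          + α * ∫ x in Box d, ψ (x, t) * fderiv ℝ φ (x, t) (0, 1)) := by
      have hpt : ∀ x : Eu d, fderiv ℝ φ (x, t) (0, 1) * w (x, t)
          = lam * (ε ^ 2 * -(fderiv ℝ φ (x, t) (0, 1) * lap (fun y => φ (y, t)) x)
            + fderiv ℝ φ (x, t) (0, 1) * (φ (x, t) * U (x, t))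
            + α * (ψ (x, t) * fderiv ℝ φ (x, t) (0, 1))) := by
        intro x
        rw [heq2 x t htI]
        ring
      rw [setIntegral_congr_fun hmeas (fun x _ => hpt x)]
      have iT1 : IntegrableOn (fun x : Eu d =>
          ε ^ 2 * -(fderiv ℝ φ (x, t) (0, 1) * lap (fun y => φ (y, t)) x)) (Box d) :=
        (iφtlap.neg).const_mul (ε ^ 2)
      have iT2 : IntegrableOn (fun x : Eu d =>
          ε ^ 2 * -(fderiv ℝ φ (x, t) (0, 1) * lap (fun y => φ (y, t)) x)
          + fderiv ℝ φ (x, t) (0, 1) * (φ (x, t) * U (x, t))) (Box d) :=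
        iT1.add iφtφU
      rw [MeasureTheory.integral_const_mul lam]
      rw [integral_add iT2 (iψφt.const_mul α)]
      rw [integral_add iT1 iφtφU]
      rw [MeasureTheory.integral_const_mul (ε ^ 2), MeasureTheory.integral_const_mul α,
        integral_neg]
    -- evaluate ∫ φ_t w via the Cahn–Hilliard equation
    have hφt1 : ∀ x : Eu d, fderiv ℝ φ (x, t) (0, 1)
        = M * lap (fun y => w (y, t)) x - dvg (fun y => φ (y, t) • u (y, t)) x := by
      intro x
      have h1 := heq1 x t htI
      rw [show deriv (fun s => φ (x, s)) t = fderiv ℝ φ (x, t) (0, 1) from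
        (hasDerivAt_slice hφs x t).deriv] at h1
      linarith
    have iwlap : IntegrableOn (fun x : Eu d =>
        w (x, t) * lap (fun y => w (y, t)) x) (Box d) :=
      cont_intOn (hwfs.continuous.mul (cont_lap hwfs))
    have iwdvg : IntegrableOn (fun x : Eu d =>
        w (x, t) * dvg (fun y => φ (y, t) • u (y, t)) x) (Box d) :=
      cont_intOn (hwfs.continuous.mul (cont_dvg hBs))
    have hwlap : ∫ x in Box d, w (x, t) * lap (fun y => w (y, t)) x
        = -∫ x in Box d, ‖gradient (fun y => w (y, t)) x‖ ^ 2 := by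
      have h := ibp_grad_grad hd0 hwfs hwfs (hwp t) (hwp t)
      have h2 : ∫ x in Box d, ⟪gradient (fun y => w (y, t)) x, gradient (fun y => w (y, t)) x⟫
          = ∫ x in Box d, ‖gradient (fun y => w (y, t)) x‖ ^ 2 :=
        setIntegral_congr_fun hmeas (fun x _ => real_inner_self_eq_norm_sq _)
      rw [h2] at h
      linarith
    have hJw : ∫ x in Box d, fderiv ℝ φ (x, t) (0, 1) * w (x, t)
        = -(M * ∫ x in Box d, ‖gradient (fun y => w (y, t)) x‖ ^ 2)
          - ∫ x in Box d, w (x, t) * dvg (fun y => φ (y, t) • u (y, t)) x := by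
      have hpt : ∀ x : Eu d, fderiv ℝ φ (x, t) (0, 1) * w (x, t)
          = M * (w (x, t) * lap (fun y => w (y, t)) x)
            - w (x, t) * dvg (fun y => φ (y, t) • u (y, t)) x := by
        intro x
        rw [hφt1 x]
        ring
      rw [setIntegral_congr_fun hmeas (fun x _ => hpt x)]
      rw [integral_sub (iwlap.const_mul M) iwdvg, MeasureTheory.integral_const_mul M, hwlap]
      ring
    rw [hwsum] at hJw
    linarith [hJw]
  rw [← hval]
  exact hkey


end PFBCP
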